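/- arXiv:2312.15754 — 4 statements merged into one kernel-verified Lean document; each statement's English description precedes it below -/
import Mathlib

section
/- Let G be a topological group acting continuously on a compact Hausdorff space X, let K be a compact subgroup of G, let x ∈ X be a point with trivial stabilizer (G_x = {e}), and let g ∈ G with g ∉ K. Then there exists a K-invariant open neighborhood U of x such that U ∩ gU = ∅. -/
open Pointwise

/-!
Since `x` has trivial stabilizer and `g ∉ K`, the compact sets `K • x` and `g • (K • x)` are
disjoint, so they have disjoint open neighbourhoods `W₁` and `W₂`. The set of points `y` with
`k • y ∈ W₁` and `g • k • y ∈ W₂` for all `k ∈ K` is `K`-invariant, contains `x`, is open by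
the tube lemma (`K` is compact), and lies in `W₁` while its `g`-translate lies in `W₂`.
-/

section

variable {G X : Type*}

theorem IsCompact.isOpen_setOf_forall_smul_mem [TopologicalSpace G] [TopologicalSpace X]
    [SMul G X] [ContinuousSMul G X] {K : Set G} (hK : IsCompact K) {W : Set X}
    (hW : IsOpen W) : IsOpen {y : X | ∀ k ∈ K, k • y ∈ W} :=
  isOpen_iff_mem_nhds.2 fun _ hy ↦ hK.eventually_forall_of_forall_eventually fun k hk ↦
    (hW.preimage (continuous_snd.smul continuous_fst)).mem_nhds (hy k hk)

variable [Group G] [MulAction G X]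

theorem Subgroup.smul_setOf_forall_smul_mem (K : Subgroup G) (W : Set X) {k : G} (hk : k ∈ K) :
    k • {y : X | ∀ k' ∈ K, k' • y ∈ W} = {y : X | ∀ k' ∈ K, k' • y ∈ W} := by
  ext y
  simp only [Set.mem_smul_set_iff_inv_smul_mem, Set.mem_ofPred_eq, smul_smul]
  constructor
  · intro h k' hk'
    simpa using h (k' * k) (K.mul_mem hk' hk)
  · exact fun h k' hk' ↦ h _ (K.mul_mem hk' (K.inv_mem hk))

theorem Subgroup.disjoint_image_smul_smul_image (K : Subgroup G) {x : X}
    (hx : ∀ h : G, h • x = x → h = 1) {g : G} (hg : g ∉ K) :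
    Disjoint ((· • x) '' (K : Set G)) (g • (· • x) '' (K : Set G)) := by
  rw [Set.disjoint_left]
  rintro _ ⟨k, hk, rfl⟩ ⟨_, ⟨k', hk', rfl⟩, hgk'⟩
  have hfix : ((g * k')⁻¹ * k) • x = x := by
    simp only at hgk'
    rw [mul_smul, ← hgk', smul_smul g k', inv_smul_smul]
  have hgk : g * k' = k := inv_mul_eq_one.1 (hx _ hfix)
  exact hg (by simpa [← hgk] using K.mul_mem hk (K.inv_mem hk'))

end

theorem stmt0_general {G X : Type*} [Group G] [TopologicalSpace G]
    [TopologicalSpace X] [T2Space X]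
    [MulAction G X] [ContinuousSMul G X]
    (K : Subgroup G) (hK : IsCompact (K : Set G))
    (x : X) (hx : ∀ h : G, h • x = x → h = 1)
    (g : G) (hg : g ∉ K) :
    ∃ U : Set X, IsOpen U ∧ x ∈ U ∧ (∀ k ∈ K, k • U = U) ∧ U ∩ g • U = ∅ := by
  have hKx : IsCompact ((· • x) '' (K : Set G)) := hK.image (continuous_id.smul continuous_const)
  obtain ⟨W₁, W₂, hW₁, hW₂, hKW₁, hgKW₂, hW⟩ := SeparatedNhds.of_isCompact_isCompact
    hKx (hKx.smul g) (K.disjoint_image_smul_smul_image hx hg)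
  refine ⟨{y | ∀ k ∈ K, k • y ∈ W₁ ∩ (g • ·) ⁻¹' W₂},
    hK.isOpen_setOf_forall_smul_mem (hW₁.inter (hW₂.preimage (continuous_const_smul g))),
    fun k hk ↦ ⟨hKW₁ ⟨k, hk, rfl⟩, hgKW₂ ⟨_, ⟨k, hk, rfl⟩, rfl⟩⟩,
    fun k hk ↦ K.smul_setOf_forall_smul_mem _ hk, ?_⟩
  rw [← Set.disjoint_iff_inter_eq_empty]
  refine hW.mono (fun y hy ↦ by simpa using (hy 1 K.one_mem).1) ?_
  rintro _ ⟨z, hz, rfl⟩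
  simpa using (hz 1 K.one_mem).2

/-- Let `G` be a topological group acting continuously on a compact
Hausdorff space `X`, let `K` be a compact subgroup of `G`, let `x ∈ X` have trivial
stabilizer, and let `g ∉ K`. Then there is a `K`-invariant open neighborhood `U` of `x`
with `U ∩ g • U = ∅`. -/
theorem stmt0 {G X : Type*} [Group G] [TopologicalSpace G] [IsTopologicalGroup G]
    [TopologicalSpace X] [CompactSpace X] [T2Space X]
    [MulAction G X] [ContinuousSMul G X]
    (K : Subgroup G) (hK : IsCompact (K : Set G))
    (x : X) (hx : ∀ h : G, h • x = x → h = 1)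
    (g : G) (hg : g ∉ K) :
    ∃ U : Set X, IsOpen U ∧ x ∈ U ∧ (∀ k ∈ K, k • U = U) ∧ U ∩ g • U = ∅ :=
  stmt0_general K hK x hx g hg
end

section
/- Let G = HNN(H, H₀, θ) with 1 < [H : H₀] < ∞ and 1 < [H : θ(H₀)] < ∞, and suppose there exist a ∈ H \ H₀ centralizing H₀ and b ∈ H \ θ(H₀) centralizing θ(H₀). Define H₀^{(0)} = H₀ and H₀^{(n+1)} = H₀ ∩ θ(H₀^{(n)}), and assume ⋂_{n ≥ 0} θ^{-n}(H₀^{(n)}) = {e}. Then the end ξ of the Bass–Serre tree T represented by the ray through the vertices btH, btat^{-1}H, btat^{-2}H, btat^{-3}H, btat^{-3}btH, … (i.e., determined by the infinite product ∏_{i=1}^∞ (btat^{-1})(t^{-2})^i) has trivial stabilizer in G. -/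
/-!
If `g w_n H = w_{n+d} H` for all `n ≥ N`, then `c_m = w_{m+N}⁻¹ g⁻¹ w_{m+N+d}` lies in `H`, and
`c_{m+1}` is `c_m` conjugated by ray steps. Britton's lemma rules out `d > 0`. For `d = 0`, a
step `a t⁻¹` or `t⁻¹` applies `θ` to `c_m` and a step `b t` applies `θ⁻¹` (this is where `a`
and `b` centralize `H₀` and `θ(H₀)`). The steps `b t` are sparse, so the net number of
applications of `θ` tends to infinity; at a time `m` where it is minimal, `c_m` has an
infinite forward `θ`-orbit. The hypothesis on the chain says exactly that only `1` has one,
so `c_m = 1` and `g = 1`.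
-/

open HNNExtension

section Defs

variable {G : Type*} [Group G]

/-- The `n`-th step (edge crossing) of the ray `b t, a t⁻¹, t⁻¹, t⁻¹, a t⁻¹ ... ` determined
by the infinite product `∏_{i ≥ I} (b t a t⁻¹)(t⁻²)^i`, where `x = b t`, `y = a t⁻¹` and
`z = t⁻¹`: block `i` consists of the steps `x, y, z, z, …, z` with `2i` copies of `z`. -/
def rayStepAux (x y z : G) : ℕ → ℕ → G
  | i, n =>
    if n = 0 then x
    else if n = 1 then y
    else if n < 2 * i + 2 then z
    else rayStepAux x y z (i + 1) (n - (2 * i + 2))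
  termination_by _ n => n
  decreasing_by omega

/-- The group element whose coset is the `n`-th vertex of the ray determined by the
infinite product `∏_{i=1}^∞ (b t a t⁻¹)(t⁻²)^i` (with `x = b t`, `y = a t⁻¹`, `z = t⁻¹`). -/
def rayProd (x y z : G) (n : ℕ) : G :=
  ((List.range n).map (rayStepAux x y z 1)).prod

end Defs

section Chain

variable {H : Type*} [Group H] {A B : Subgroup H} (φ : A ≃* B)

/-- The preimage `θ⁻¹(C) ⊆ H₀` of a subset `C ⊆ H` under `θ = φ : H₀ → H`. -/
def thetaInv (C : Set H) : Set H :=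
  {h : H | ∃ hh : h ∈ A, (φ ⟨h, hh⟩ : H) ∈ C}

/-- The chain `H₀^{(0)} = H₀`, `H₀^{(n+1)} = H₀ ∩ θ(H₀^{(n)})`. -/
def hnnChain : ℕ → Set H
  | 0 => (A : Set H)
  | n + 1 => (A : Set H) ∩ {h : H | ∃ x : A, (x : H) ∈ hnnChain n ∧ (φ x : H) = h}

end Chain

open Filter

section RaySteps

variable {G : Type*} (x y z : G)

theorem rayStepAux_eq_left (i k : ℕ) : rayStepAux x y z i (k * k + (2 * i + 1) * k) = x := by
  induction k generalizing i with
  | zero => simp [rayStepAux]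
  | succ k ih =>
    rw [rayStepAux, if_neg (by nlinarith), if_neg (by nlinarith), if_neg (by nlinarith)]
    convert ih (i + 1) using 2
    ring_nf
    omega

theorem rayStepAux_eq_or (i n : ℕ) (hn : ∀ k, n ≠ k * k + (2 * i + 1) * k) :
    rayStepAux x y z i n = y ∨ rayStepAux x y z i n = z := by
  induction n using Nat.strong_induction_on generalizing i with
  | _ n ih =>
    rw [rayStepAux, if_neg (by simpa using hn 0)]
    split_ifs with h1 h2
    · exact .inl rfl
    · exact .inr rfl
    refine ih _ (by omega) _ fun k hk => hn (k + 1) ?_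
    rw [← Nat.sub_add_cancel (not_lt.1 h2), hk]
    ring

theorem exists_rayStepAux_eq_left_and_eq_or (N d : ℕ) (hd : 0 < d) :
    ∃ n ≥ N, rayStepAux x y z 1 n = x ∧
      (rayStepAux x y z 1 (n + d) = y ∨ rayStepAux x y z 1 (n + d) = z) := by
  obtain ⟨K, hNK, hdK⟩ : ∃ K, N ≤ K ∧ d ≤ K := ⟨N + d, by omega, by omega⟩
  refine ⟨K * K + (2 * 1 + 1) * K, by nlinarith, rayStepAux_eq_left x y z 1 K,
    rayStepAux_eq_or x y z 1 _ fun k hk => ?_⟩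
  rcases le_or_gt k K with hkK | hKk
  · nlinarith [Nat.mul_le_mul hkK hkK]
  · have hKk : K + 1 ≤ k := hKk
    nlinarith [Nat.mul_le_mul hKk hKk]

theorem rayProd_succ [Group G] (n : ℕ) :
    rayProd x y z (n + 1) = rayProd x y z n * rayStepAux x y z 1 n := by
  simp [rayProd, List.range_succ]

end RaySteps

-- The steps `b t` of the ray, at the positions `k * k + 3 * k`, count `-1`; all others `+1`.
open Classical in
noncomputable def rayHeight (n : ℕ) : ℤ :=
  n - 2 * ((Finset.range n).filter fun j => ∃ k, j = k * k + 3 * k).card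

theorem rayHeight_succ_of_exists {n : ℕ} (hn : ∃ k, n = k * k + 3 * k) :
    rayHeight (n + 1) = rayHeight n - 1 := by
  simp only [rayHeight, Finset.range_add_one, Finset.filter_insert, if_pos hn]
  rw [Finset.card_insert_of_notMem (by simp)]
  push_cast
  ring

theorem rayHeight_succ_of_not_exists {n : ℕ} (hn : ¬∃ k, n = k * k + 3 * k) :
    rayHeight (n + 1) = rayHeight n + 1 := by
  simp only [rayHeight, Finset.range_add_one, Finset.filter_insert, if_neg hn]
  push_cast
  ring

theorem sub_two_mul_sqrt_le_rayHeight (n : ℕ) : (n : ℤ) - 2 * (Nat.sqrt n + 1) ≤ rayHeight n := by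
  classical
  have hcard : ((Finset.range n).filter fun j => ∃ k, j = k * k + 3 * k).card ≤ Nat.sqrt n + 1 :=
    calc _ ≤ ((Finset.range (Nat.sqrt n + 1)).image fun k => k * k + 3 * k).card := by
          refine Finset.card_le_card fun j hj => ?_
          obtain ⟨hjn, k, rfl⟩ := by simpa using hj
          exact Finset.mem_image.2 ⟨k, Finset.mem_range.2 (Nat.lt_succ_of_le
            (Nat.le_sqrt.2 (by omega))), rfl⟩
      _ ≤ Nat.sqrt n + 1 := Finset.card_image_le.trans (Finset.card_range _).le
  unfold rayHeight
  omega

theorem tendsto_rayHeight : Tendsto rayHeight atTop atTop := by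
  refine tendsto_atTop_atTop.2 fun L => ⟨(L.toNat + 3) * (L.toNat + 3), fun n hn => ?_⟩
  have hs : L.toNat + 3 ≤ Nat.sqrt n := Nat.le_sqrt.2 hn
  have hsn : Nat.sqrt n * Nat.sqrt n ≤ n := Nat.sqrt_le n
  have hL : L ≤ (L.toNat : ℤ) := Int.self_le_toNat L
  have h1 : ((L.toNat + 3 : ℕ) : ℤ) ≤ Nat.sqrt n := by exact_mod_cast hs
  have h2 : ((Nat.sqrt n * Nat.sqrt n : ℕ) : ℤ) ≤ n := by exact_mod_cast hsn
  push_cast at h1 h2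
  nlinarith [sub_two_mul_sqrt_le_rayHeight n]

section Theta

variable {H : Type*} [Group H] {A B : Subgroup H} (φ : A ≃* B)

theorem thetaInv_mono : Monotone (thetaInv φ) :=
  fun _ _ hCD _ ⟨hh, hC⟩ => ⟨hh, hCD hC⟩

theorem thetaInv_inter (C D : Set H) : thetaInv φ (C ∩ D) = thetaInv φ C ∩ thetaInv φ D := by
  ext h
  exact ⟨fun ⟨hh, hC, hD⟩ => ⟨⟨hh, hC⟩, hh, hD⟩, fun ⟨⟨hh, hC⟩, _, hD⟩ => ⟨hh, hC, hD⟩⟩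

theorem thetaInv_iterate_inter (n : ℕ) (C D : Set H) :
    (thetaInv φ)^[n] (C ∩ D) = (thetaInv φ)^[n] C ∩ (thetaInv φ)^[n] D := by
  induction n generalizing C D with
  | zero => rfl
  | succ n ih => simp only [Function.iterate_succ_apply, thetaInv_inter, ih]

theorem thetaInv_univ : thetaInv φ Set.univ = A := by
  ext h
  exact ⟨fun ⟨hh, _⟩ => hh, fun hh => ⟨hh, trivial⟩⟩

theorem antitone_thetaInv_iterate_univ : Antitone fun n => (thetaInv φ)^[n] Set.univ :=
  antitone_nat_of_succ_le fun n => by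
    rw [Function.iterate_succ_apply]
    exact (thetaInv_mono φ).iterate n (Set.subset_univ _)

theorem thetaInv_hnnChain_succ (n : ℕ) :
    thetaInv φ (hnnChain φ (n + 1)) = hnnChain φ n ∩ thetaInv φ A := by
  ext h
  constructor
  · rintro ⟨hh, hA, u, hu, hφu⟩
    obtain rfl : u = ⟨h, hh⟩ := φ.injective (Subtype.ext hφu)
    exact ⟨hu, hh, hA⟩
  · rintro ⟨hn, hh, hA⟩
    exact ⟨hh, hA, ⟨h, hh⟩, hn, rfl⟩

theorem thetaInv_iterate_hnnChain (n : ℕ) :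
    (thetaInv φ)^[n] (hnnChain φ n) = (thetaInv φ)^[n + 1] Set.univ := by
  induction n with
  | zero => exact (thetaInv_univ φ).symm
  | succ n ih =>
    rw [Function.iterate_succ_apply, thetaInv_hnnChain_succ, thetaInv_iterate_inter, ih,
      ← thetaInv_univ φ, ← Function.iterate_succ_apply]
    exact Set.inter_eq_right.2 (antitone_thetaInv_iterate_univ φ (Nat.le_succ (n + 1)))

theorem thetaInv_singleton {u v : H} (h : u ∈ thetaInv φ {v}) : thetaInv φ {v} = {u} := by
  obtain ⟨hu, rfl⟩ := h
  ext w
  exact ⟨fun ⟨hw, hφw⟩ => congrArg Subtype.val (φ.injective (Subtype.ext hφw)),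
    by rintro rfl; exact ⟨hu, rfl⟩⟩

variable {φ} {c : ℕ → H} {e : ℕ → ℤ}

-- Up-steps apply `θ`, and a down-step undoes the last one by injectivity of `θ`; the minimality
-- of `e m` guarantees that there is always a last one to undo.
theorem mem_thetaInv_iterate_of_forall_le
    (hstep : ∀ j, c j ∈ thetaInv φ {c (j + 1)} ∧ e (j + 1) = e j + 1 ∨
      c (j + 1) ∈ thetaInv φ {c j} ∧ e (j + 1) = e j - 1)
    {m : ℕ} (hm : ∀ j, e m ≤ e j) {j : ℕ} (hmj : m ≤ j) :
    ∀ k : ℕ, e j = e m + k → c m ∈ (thetaInv φ)^[k] {c j} := by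
  induction j, hmj using Nat.le_induction with
  | base =>
    intro k hk
    obtain rfl : k = 0 := by omega
    exact rfl
  | succ j _ ih =>
    intro k hk
    rcases hstep j with ⟨hup, hej⟩ | ⟨hdown, hej⟩
    · obtain ⟨k, rfl⟩ : ∃ k', k = k' + 1 := ⟨k - 1, by have := hm j; omega⟩
      rw [Function.iterate_succ_apply]
      exact (thetaInv_mono φ).iterate k (Set.singleton_subset_iff.2 hup) (ih k (by omega))
    · have := ih (k + 1) (by omega)
      rwa [Function.iterate_succ_apply, thetaInv_singleton φ hdown] at this

theorem exists_forall_mem_thetaInv_iterate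
    (hstep : ∀ j, c j ∈ thetaInv φ {c (j + 1)} ∧ e (j + 1) = e j + 1 ∨
      c (j + 1) ∈ thetaInv φ {c j} ∧ e (j + 1) = e j - 1)
    (he : Tendsto e atTop atTop) : ∃ m, ∀ n, c m ∈ (thetaInv φ)^[n] Set.univ := by
  obtain ⟨m, hm⟩ := (Nat.cofinite_eq_atTop ▸ he).exists_forall_le
  refine ⟨m, fun n => ?_⟩
  obtain ⟨j, hj, hmj⟩ := ((he.eventually_ge_atTop (e m + n)).and (eventually_ge_atTop m)).exists
  obtain ⟨k, hk⟩ : ∃ k : ℕ, e j = e m + k := ⟨(e j - e m).toNat, by omega⟩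
  exact antitone_thetaInv_iterate_univ φ (show n ≤ k by omega)
    ((thetaInv_mono φ).iterate k (Set.subset_univ _)
      (mem_thetaInv_iterate_of_forall_le hstep hm hmj k hk))

end Theta

section Britton

variable {H : Type*} [Group H] {A B : Subgroup H} {φ : A ≃* B}

theorem HNNExtension.mem_of_t_mul_of_mul_t_inv_mem_range {u : H}
    (hu : t * of u * t⁻¹ ∈ (of : H →* HNNExtension H A B φ).range) : u ∈ A := by
  by_contra hu'
  have h := ReducedWord.toList_eq_nil_of_mem_of_range φ
    ⟨1, [(1, u), (-1, 1)], List.isChain_pair.2 fun hx => absurd (by simpa using hx) hu'⟩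
    (by simpa [NormalWord.ReducedWord.prod, mul_assoc] using hu)
  simp at h

theorem HNNExtension.mem_of_t_inv_mul_of_mul_t_mem_range {u : H}
    (hu : t⁻¹ * of u * t ∈ (of : H →* HNNExtension H A B φ).range) : u ∈ B := by
  by_contra hu'
  have h := ReducedWord.toList_eq_nil_of_mem_of_range φ
    ⟨1, [(-1, u), (1, 1)], List.isChain_pair.2 fun hx => absurd (by simpa using hx) hu'⟩
    (by simpa [NormalWord.ReducedWord.prod, mul_assoc] using hu)
  simp at h

theorem HNNExtension.t_inv_mul_of_mul_t_inv_notMem_range (u : H) :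
    t⁻¹ * of u * t⁻¹ ∉ (of : H →* HNNExtension H A B φ).range := by
  intro hu
  have h := ReducedWord.toList_eq_nil_of_mem_of_range φ
    ⟨1, [(-1, u), (-1, 1)], List.isChain_pair.2 fun _ => rfl⟩
    (by simpa [NormalWord.ReducedWord.prod, mul_assoc] using hu)
  simp at h

theorem mem_thetaInv_singleton_of_of_eq_t_conj {u v : H}
    (h : (of v : HNNExtension H A B φ) = t * of u * t⁻¹) : u ∈ thetaInv φ {v} := by
  have hu : u ∈ A := mem_of_t_mul_of_mul_t_inv_mem_range (φ := φ) ⟨v, h⟩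
  exact ⟨hu, of_injective (φ := φ) (by rw [h, equiv_eq_conj])⟩

theorem mem_thetaInv_singleton_of_of_eq_t_inv_conj {u v : H}
    (h : (of v : HNNExtension H A B φ) = t⁻¹ * of u * t) : v ∈ thetaInv φ {u} := by
  have hu : u ∈ B := mem_of_t_inv_mul_of_mul_t_mem_range (φ := φ) ⟨v, h⟩
  have hv : v = φ.symm ⟨u, hu⟩ := of_injective (φ := φ) (by rw [h, equiv_symm_eq_conj])
  subst hv
  exact ⟨SetLike.coe_mem _, by simp⟩

end Britton

section Ray

variable {H : Type*} [Group H] {A B : Subgroup H} {φ : A ≃* B}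

theorem mem_thetaInv_singleton_of_of_eq_conj_mul_t_inv {a u v : H}
    (hacen : ∀ h ∈ A, a * h = h * a)
    (h : (of v : HNNExtension H A B φ) = (of a * t⁻¹)⁻¹ * of u * (of a * t⁻¹)) :
    u ∈ thetaInv φ {v} := by
  have hconj : a⁻¹ * u * a ∈ thetaInv φ {v} :=
    mem_thetaInv_singleton_of_of_eq_t_conj (by rw [h]; simp only [map_mul, map_inv]; group)
  have hcomm := hacen _ hconj.1
  rwa [show a⁻¹ * u * a = u from (mul_right_cancel (by simpa [mul_assoc] using hcomm)).symm]
    at hconj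

theorem mem_thetaInv_singleton_of_of_eq_conj_mul_t {b u v : H}
    (hbcen : ∀ h ∈ B, b * h = h * b)
    (h : (of v : HNNExtension H A B φ) = (of b * t)⁻¹ * of u * (of b * t)) :
    v ∈ thetaInv φ {u} := by
  obtain ⟨hv, hφv⟩ : v ∈ thetaInv φ {b⁻¹ * u * b} :=
    mem_thetaInv_singleton_of_of_eq_t_inv_conj (by rw [h]; simp only [map_mul, map_inv]; group)
  have hcomm := hbcen (b⁻¹ * u * b) (hφv ▸ (φ ⟨v, hv⟩).2)
  rw [show b⁻¹ * u * b = u from (mul_right_cancel (by simpa [mul_assoc] using hcomm)).symm]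
    at hφv
  exact ⟨hv, hφv⟩

variable {a b : H}

theorem mem_thetaInv_of_eq_conj_rayStep (hacen : ∀ h ∈ A, a * h = h * a)
    (hbcen : ∀ h ∈ B, b * h = h * b) {u v : H} {n : ℕ}
    (h : (of v : HNNExtension H A B φ) =
      (rayStepAux (of b * t) (of a * t⁻¹) t⁻¹ 1 n)⁻¹ * of u *
        rayStepAux (of b * t) (of a * t⁻¹) t⁻¹ 1 n) :
    u ∈ thetaInv φ {v} ∧ rayHeight (n + 1) = rayHeight n + 1 ∨
      v ∈ thetaInv φ {u} ∧ rayHeight (n + 1) = rayHeight n - 1 := by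
  by_cases hn : ∃ k, n = k * k + 3 * k
  · obtain ⟨k, rfl⟩ := hn
    rw [show k * k + 3 * k = k * k + (2 * 1 + 1) * k from rfl, rayStepAux_eq_left] at h
    exact .inr ⟨mem_thetaInv_singleton_of_of_eq_conj_mul_t hbcen h,
      rayHeight_succ_of_exists ⟨k, rfl⟩⟩
  · refine .inl ⟨?_, rayHeight_succ_of_not_exists hn⟩
    rcases rayStepAux_eq_or (of b * t) (of a * t⁻¹) t⁻¹ 1 n (fun k hk => hn ⟨k, hk⟩) with hy | hz
    · exact mem_thetaInv_singleton_of_of_eq_conj_mul_t_inv hacen (hy ▸ h)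
    · exact mem_thetaInv_singleton_of_of_eq_t_conj (by rw [h, hz, inv_inv])

-- A shift `d > 0` would face a step `b t` with a step `a t⁻¹` or `t⁻¹`, giving `t⁻¹ h t⁻¹ ∈ H`.
theorem eq_zero_of_eq_conj_rayStep {c : ℕ → H} {N d : ℕ}
    (hrec : ∀ m, (of (c (m + 1)) : HNNExtension H A B φ) =
      (rayStepAux (of b * t) (of a * t⁻¹) t⁻¹ 1 (m + N))⁻¹ * of (c m) *
        rayStepAux (of b * t) (of a * t⁻¹) t⁻¹ 1 (m + N + d)) :
    d = 0 := by
  by_contra hd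
  obtain ⟨n, hnN, hx, hyz⟩ :=
    exists_rayStepAux_eq_left_and_eq_or (of b * t) (of a * t⁻¹) (t : HNNExtension H A B φ)⁻¹
      N d (Nat.pos_of_ne_zero hd)
  obtain ⟨m, rfl⟩ : ∃ m, n = m + N := ⟨n - N, by omega⟩
  have hm := hrec m
  rcases hyz with hy | hz
  · rw [hx, hy] at hm
    exact t_inv_mul_of_mul_t_inv_notMem_range (b⁻¹ * c m * a)
      ⟨c (m + 1), by rw [hm]; simp only [map_mul, map_inv]; group⟩
  · rw [hx, hz] at hm
    exact t_inv_mul_of_mul_t_inv_notMem_range (b⁻¹ * c m)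
      ⟨c (m + 1), by rw [hm]; simp only [map_mul, map_inv]; group⟩

theorem eq_one_of_forall_ge_smul_mk_rayProd_eq (hacen : ∀ h ∈ A, a * h = h * a)
    (hbcen : ∀ h ∈ B, b * h = h * b) (hchain : (⋂ n : ℕ, (thetaInv φ)^[n] (hnnChain φ n)) = {1})
    {g : HNNExtension H A B φ} {d N : ℕ}
    (hg : ∀ n ≥ N, g • (QuotientGroup.mk (rayProd (of b * t) (of a * t⁻¹) t⁻¹ n) :
        HNNExtension H A B φ ⧸ (of : H →* HNNExtension H A B φ).range) =
      QuotientGroup.mk (rayProd (of b * t) (of a * t⁻¹) t⁻¹ (n + d))) :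
    g = 1 := by
  set w := rayProd (of b * t) (of a * t⁻¹) (t : HNNExtension H A B φ)⁻¹
  have hc : ∀ m, ∃ c : H, of c = (w (m + N))⁻¹ * g⁻¹ * w (m + N + d) := fun m => by
    obtain ⟨c, hc⟩ := QuotientGroup.eq.1 (hg (m + N) (Nat.le_add_left N m))
    exact ⟨c, hc.trans (congrArg (· * w (m + N + d)) (mul_inv_rev g _))⟩
  choose c hc using hc
  have hw : ∀ n, w (n + 1) = w n * rayStepAux (of b * t) (of a * t⁻¹) t⁻¹ 1 n := rayProd_succ _ _ _
  have hrec : ∀ m, of (c (m + 1)) = (rayStepAux (of b * t) (of a * t⁻¹) t⁻¹ 1 (m + N))⁻¹ *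
      of (c m) * rayStepAux (of b * t) (of a * t⁻¹) t⁻¹ 1 (m + N + d) := fun m => by
    rw [hc, hc, Nat.add_right_comm m 1 N, Nat.add_right_comm _ 1 d, hw, hw]
    group
  obtain rfl : d = 0 := eq_zero_of_eq_conj_rayStep hrec
  obtain ⟨m, hm⟩ := exists_forall_mem_thetaInv_iterate (e := fun m => rayHeight (m + N))
    (fun m => by
      simpa only [Nat.add_right_comm m 1 N] using
        mem_thetaInv_of_eq_conj_rayStep hacen hbcen (hrec m))
    (tendsto_rayHeight.comp (tendsto_add_atTop_nat N))
  have hcm : c m = 1 := by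
    rw [← Set.mem_singleton_iff, ← hchain, Set.mem_iInter]
    exact fun n => (thetaInv_iterate_hnnChain φ n).symm ▸ hm (n + 1)
  have hconj := hc m
  rw [hcm, map_one, add_zero] at hconj
  exact inv_eq_one.1 ((conj_eq_one_iff (a := (w (m + N))⁻¹)).1 (by rw [inv_inv, ← hconj]))

end Ray

theorem stmt6_general {H : Type*} [Group H] (A B : Subgroup H) (φ : A ≃* B)
    (a : H) (hacen : ∀ h ∈ A, a * h = h * a)
    (b : H) (hbcen : ∀ h ∈ B, b * h = h * b)
    (hchain : (⋂ n : ℕ, (thetaInv φ)^[n] (hnnChain φ n)) = {1})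
    (g : HNNExtension H A B φ)
    (hstab : ∃ d N : ℕ,
      (∀ n ≥ N, g • (QuotientGroup.mk
            (rayProd (of b * t) (of a * t⁻¹) (t : HNNExtension H A B φ)⁻¹ n) :
          HNNExtension H A B φ ⧸ (of : H →* HNNExtension H A B φ).range) =
        QuotientGroup.mk
          (rayProd (of b * t) (of a * t⁻¹) (t : HNNExtension H A B φ)⁻¹ (n + d))) ∨
      (∀ n ≥ N, g • (QuotientGroup.mk
            (rayProd (of b * t) (of a * t⁻¹) (t : HNNExtension H A B φ)⁻¹ (n + d)) :
          HNNExtension H A B φ ⧸ (of : H →* HNNExtension H A B φ).range) =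
        QuotientGroup.mk
          (rayProd (of b * t) (of a * t⁻¹) (t : HNNExtension H A B φ)⁻¹ n))) :
    g = 1 := by
  obtain ⟨d, N, hforward | hbackward⟩ := hstab
  · exact eq_one_of_forall_ge_smul_mk_rayProd_eq hacen hbcen hchain hforward
  · refine inv_eq_one.1 (eq_one_of_forall_ge_smul_mk_rayProd_eq hacen hbcen hchain (d := d) (N := N)
      fun n hn => ?_)
    rw [inv_smul_eq_iff, hbackward n hn]

/-- Let `G = HNN(H, H₀, θ)` with `1 < [H : H₀] < ∞`,
`1 < [H : θ(H₀)] < ∞`, `a ∈ H \ H₀` centralizing `H₀`, `b ∈ H \ θ(H₀)` centralizing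
`θ(H₀)`, and `⋂_n θ⁻ⁿ(H₀⁽ⁿ⁾) = {e}` for the chain `H₀⁽⁰⁾ = H₀`,
`H₀⁽ⁿ⁺¹⁾ = H₀ ∩ θ(H₀⁽ⁿ⁾)`.  Then the end `ξ` of the Bass–Serre tree represented by the
ray through `btH, btat⁻¹H, btat⁻²H, …` (determined by `∏_{i=1}^∞ (btat⁻¹)(t⁻²)^i`) has
trivial stabilizer: any `g ∈ G` which eventually translates this ray (by any degree
`d ≥ 0`, in either direction) is trivial. -/
theorem stmt6 {H : Type*} [Group H] (A B : Subgroup H) (φ : A ≃* B)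
    (hA1 : 1 < A.index) (hAfin : A.index ≠ 0)
    (hB1 : 1 < B.index) (hBfin : B.index ≠ 0)
    (a : H) (ha : a ∉ A) (hacen : ∀ h ∈ A, a * h = h * a)
    (b : H) (hb : b ∉ B) (hbcen : ∀ h ∈ B, b * h = h * b)
    (hchain : (⋂ n : ℕ, (thetaInv φ)^[n] (hnnChain φ n)) = {1})
    (g : HNNExtension H A B φ)
    (hstab : ∃ d N : ℕ,
      (∀ n ≥ N, g • (QuotientGroup.mk
            (rayProd (of b * t) (of a * t⁻¹) (t : HNNExtension H A B φ)⁻¹ n) :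
          HNNExtension H A B φ ⧸ (of : H →* HNNExtension H A B φ).range) =
        QuotientGroup.mk
          (rayProd (of b * t) (of a * t⁻¹) (t : HNNExtension H A B φ)⁻¹ (n + d))) ∨
      (∀ n ≥ N, g • (QuotientGroup.mk
            (rayProd (of b * t) (of a * t⁻¹) (t : HNNExtension H A B φ)⁻¹ (n + d)) :
          HNNExtension H A B φ ⧸ (of : H →* HNNExtension H A B φ).range) =
        QuotientGroup.mk
          (rayProd (of b * t) (of a * t⁻¹) (t : HNNExtension H A B φ)⁻¹ n))) :
    g = 1 :=
  stmt6_general A B φ a hacen b hbcen hchain g hstab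
end

section
/- Let G be a locally compact group and X a compact G-space such that the stabilizer map x ↦ G_x ∈ Sub(G) is continuous (Chabauty topology), with a continuous field of Haar measures {μ_y}: for each f ∈ C_c(G), y ↦ ∫_{G_y} f dμ_y is continuous. Then the map τ: {(g,y) ∈ G × X : g·y = y} → ℝ defined by τ(g,y) = Δ_{G_y}(g)^{-1/2} is continuous, where Δ_{G_y} is the modular function of the stabilizer G_y. -/
open MeasureTheory Set Topology

/-!
Fix a compact open subgroup `K ≤ G` (van Dantzig). On the stabilizer set the defining identity
`μ_y(K g) = Δ(g, y) μ_y(K)` gives `Δ(g, y) = μ_y(K g) / μ_y(K)`. The right coset `K g` is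
locally constant in `g`, and for a fixed compact clopen set `s` the map `y ↦ μ_y(s)` is
continuous because the indicator of `s` is a compactly supported continuous function. Hence the
ratio is jointly continuous and positive, and so is its power `-1/2`.
-/

section TopologicalGroup

variable {G : Type*} [Group G] [TopologicalSpace G] [IsTopologicalGroup G]

theorem exists_isCompact_openSubgroup [LocallyCompactSpace G] [TotallyDisconnectedSpace G] :
    ∃ H : OpenSubgroup G, IsCompact (H : Set G) := by
  obtain ⟨C, hC, hC1⟩ := exists_compact_mem_nhds (1 : G)
  obtain ⟨K, hK, h1K, hKC⟩ := loc_compact_Haus_tot_disc_of_zero_dim.mem_nhds_iff.mp hC1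
  obtain ⟨V, hV, hKV⟩ := compact_open_separated_mul_right
    (hC.of_isClosed_subset hK.isClosed hKC) hK.isOpen subset_rfl
  -- the right stabilizer of `K`: open since `K V ⊆ K`, and contained in `K` since `1 ∈ K`
  let S : Subgroup G :=
    { carrier := {s | ∀ k, k * s ∈ K ↔ k ∈ K}
      one_mem' := by simp
      mul_mem' := fun ha hb k => by rw [← mul_assoc, hb, ha]
      inv_mem' := fun ha k => by rw [← ha, inv_mul_cancel_right] }
  have hVS : V ∩ V⁻¹ ⊆ S := fun s ⟨hs, hs'⟩ k =>
    ⟨fun hks => by simpa using hKV (mul_mem_mul hks hs'), fun hk => hKV (mul_mem_mul hk hs)⟩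
  have hSK : (S : Set G) ⊆ K := fun s hs => by simpa using (hs 1).2 h1K
  have hS : IsOpen (S : Set G) := S.isOpen_of_mem_nhds (g := 1)
    (Filter.mem_of_superset (Filter.inter_mem hV (inv_mem_nhds_one G hV)) hVS)
  let H : OpenSubgroup G := ⟨S, hS⟩
  exact ⟨H, hC.of_isClosed_subset H.isClosed (hSK.trans hKC)⟩

theorem OpenSubgroup.isLocallyConstant_image_mul_right (H : OpenSubgroup G) :
    IsLocallyConstant fun g : G => (· * g) '' (H : Set G) := by
  refine (IsLocallyConstant.iff_eventually_eq _).2 fun g₀ => ?_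
  filter_upwards [(H.isOpen.preimage (continuous_mul_const g₀⁻¹)).mem_nhds
    (by simp : g₀ * g₀⁻¹ ∈ (H : Set G))] with g hg
  ext x
  simp only [image_mul_right, mem_preimage, SetLike.mem_coe]
  rw [show x * g₀⁻¹ = x * g⁻¹ * (g * g₀⁻¹) by group]
  exact (mul_mem_cancel_right hg).symm

end TopologicalGroup

theorem IsLocallyConstant.continuous_uncurry {α β Z : Type*} [TopologicalSpace α]
    [TopologicalSpace β] [TopologicalSpace Z] {F : α → β → Z} (hF : IsLocallyConstant F)
    (hcont : ∀ a, Continuous (F a)) : Continuous (Function.uncurry F) := by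
  refine continuous_iff_continuousAt.2 fun p => ?_
  refine ((hcont p.1).comp continuous_snd).continuousAt.congr_of_eventuallyEq ?_
  filter_upwards [continuous_fst.continuousAt.eventually (hF.eventually_eq p.1)] with q hq
  simp [Function.uncurry, hq]

theorem continuous_measureReal_of_isClopen {G X : Type*} [TopologicalSpace G]
    [MeasurableSpace G] [OpensMeasurableSpace G] [TopologicalSpace X] {μ : X → Measure G}
    (hcont : ∀ f : G → ℝ, Continuous f → HasCompactSupport f →
      Continuous fun y => ∫ g, f g ∂μ y)
    {s : Set G} (hs : IsClopen s) (hsc : IsCompact s) :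
    Continuous fun y => (μ y).real s := by
  have := hcont (s.indicator 1) (hs.continuous_indicator continuous_const)
    (HasCompactSupport.intro' hsc hs.isClosed fun x hx => indicator_of_notMem hx 1)
  simpa only [integral_indicator_one hs.isOpen.measurableSet] using this

theorem MeasureTheory.Measure.eq_real_div_real_of_apply_eq_ofReal_mul {α : Type*}
    [MeasurableSpace α] {ν : Measure α} {s t : Set α} {δ : ℝ} (hδ : 0 ≤ δ)
    (hs₀ : ν s ≠ 0) (hs : ν s ≠ ⊤) (h : ν t = ENNReal.ofReal δ * ν s) :
    δ = ν.real t / ν.real s := by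
  rw [measureReal_def, measureReal_def, h, ENNReal.toReal_mul, ENNReal.toReal_ofReal hδ,
    mul_div_cancel_right₀ _ (ENNReal.toReal_pos hs₀ hs).ne']

theorem stmt9_general {G X : Type*} [Group G] [TopologicalSpace G] [IsTopologicalGroup G]
    [LocallyCompactSpace G] [TotallyDisconnectedSpace G]
    [MeasurableSpace G] [BorelSpace G]
    [TopologicalSpace X]
    [MulAction G X]
    -- the field of left Haar measures on the stabilizers
    (μ : X → Measure G)
    (hpos : ∀ (y : X) (U : Set G), IsOpen U → (∃ g ∈ U, g • y = y) → 0 < μ y U)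
    (hfin : ∀ (y : X) (C : Set G), IsCompact C → μ y C < ⊤)
    -- continuity of the field of measures (continuous stabilizer map)
    (hcont : ∀ f : G → ℝ, Continuous f → HasCompactSupport f →
      Continuous fun y => ∫ g, f g ∂μ y)
    -- the modular functions of the stabilizers
    (Δ : G → X → ℝ) (hΔpos : ∀ (h : G) (y : X), h • y = y → 0 < Δ h y)
    (hΔ : ∀ (y : X) (h : G), h • y = y → ∀ s : Set G, MeasurableSet s →
      μ y ((fun g => g * h) '' s) = ENNReal.ofReal (Δ h y) * μ y s) :
    Continuous fun p : {p : G × X // p.1 • p.2 = p.2} =>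
      (Δ p.1.1 p.1.2) ^ (-(1 / 2) : ℝ) := by
  obtain ⟨K, hK⟩ := exists_isCompact_openSubgroup (G := G)
  have hμK (y : X) : μ y K ≠ 0 :=
    (hpos y K K.isOpen ⟨1, K.one_mem, one_smul G y⟩).ne'
  have hcoset (g : G) : Continuous fun y => (μ y).real ((· * g) '' K) :=
    continuous_measureReal_of_isClopen hcont
      ⟨(Homeomorph.mulRight g).isClosedMap _ K.isClosed,
        (Homeomorph.mulRight g).isOpenMap _ K.isOpen⟩
      (hK.image (continuous_mul_const g))
  let F : G × X → ℝ := fun p => (μ p.2).real ((· * p.1) '' K) / (μ p.2).real K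
  have hF : Continuous F := by
    refine ((K.isLocallyConstant_image_mul_right.comp fun c y => (μ y).real c).continuous_uncurry
      hcoset).div (by simpa using (hcoset 1).snd') fun p => ?_
    exact (ENNReal.toReal_pos (hμK p.2) (hfin p.2 K hK).ne).ne'
  have hΔF (p : {p : G × X // p.1 • p.2 = p.2}) : Δ p.1.1 p.1.2 = F p.1 :=
    Measure.eq_real_div_real_of_apply_eq_ofReal_mul (hΔpos _ _ p.2).le (hμK _) (hfin _ K hK).ne
      (hΔ _ _ p.2 K K.isOpen.measurableSet)
  simp_rw [hΔF]
  exact (hF.comp continuous_subtype_val).rpow_const fun p =>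
    .inl <| by simpa only [Function.comp_apply, ← hΔF] using (hΔpos _ _ p.2).ne'

/-- Let `G` be a totally disconnected locally compact group acting on a
compact space `X` with continuous stabilizer map and a continuous field of Haar measures
`{μ_y}` on the stabilizers (for each `f ∈ C_c(G)`, `y ↦ ∫_{G_y} f dμ_y` is continuous).
Then `τ(g, y) = Δ_{G_y}(g)^{-1/2}` is continuous on `{(g,y) : g • y = y}`, where
`Δ_{G_y}` is the modular function of the stabilizer `G_y`. -/
theorem stmt9 {G X : Type*} [Group G] [TopologicalSpace G] [IsTopologicalGroup G]
    [LocallyCompactSpace G] [TotallyDisconnectedSpace G]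
    [MeasurableSpace G] [BorelSpace G]
    [TopologicalSpace X] [CompactSpace X] [T2Space X]
    [MulAction G X] [ContinuousSMul G X]
    -- the field of left Haar measures on the stabilizers
    (μ : X → Measure G)
    (hsupp : ∀ y, μ y {g : G | g • y ≠ y} = 0)
    (hinv : ∀ (y : X) (h : G), h • y = y → Measure.map (fun g => h * g) (μ y) = μ y)
    (hpos : ∀ (y : X) (U : Set G), IsOpen U → (∃ g ∈ U, g • y = y) → 0 < μ y U)
    (hfin : ∀ (y : X) (C : Set G), IsCompact C → μ y C < ⊤)
    -- continuity of the field of measures (continuous stabilizer map)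
    (hcont : ∀ f : G → ℝ, Continuous f → HasCompactSupport f →
      Continuous fun y => ∫ g, f g ∂μ y)
    -- the modular functions of the stabilizers
    (Δ : G → X → ℝ) (hΔpos : ∀ (h : G) (y : X), h • y = y → 0 < Δ h y)
    (hΔ : ∀ (y : X) (h : G), h • y = y → ∀ s : Set G, MeasurableSet s →
      μ y ((fun g => g * h) '' s) = ENNReal.ofReal (Δ h y) * μ y s) :
    Continuous fun p : {p : G × X // p.1 • p.2 = p.2} =>
      (Δ p.1.1 p.1.2) ^ (-(1 / 2) : ℝ) :=
  stmt9_general μ hpos hfin hcont Δ hΔpos hΔ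
end

section
/- In the construction of Proposition: let x ∈ X with nontrivial stabilizer G_x, g₁ ≠ g₂ ∈ G_x, and f₁, f₂ ∈ C_c(G) positive with disjoint supports, f_i(g_i) > 0. Define η₀ ∈ C_c(G, C(X)) by η₀(s)(y) = f₁(s) ∫_{G_y} f₂(h) dμ_y(h) − f₂(s) ∫_{G_y} f₁(h) dμ_y(h). Then: (a) ∫_{G_y} η₀(h)(y) dμ_y(h) = 0 for every y ∈ X; (b) the restriction of h ↦ η₀(h)(x) to G_x is not identically zero. -/
open MeasureTheory

section
variable {G : Type*} [MeasurableSpace G] {μ : Measure G}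

theorem integral_mul_integral_sub_mul_integral_eq_zero {f₁ f₂ : G → ℝ}
    (h₁ : Integrable f₁ μ) (h₂ : Integrable f₂ μ) :
    ∫ h, (f₁ h * ∫ k, f₂ k ∂μ - f₂ h * ∫ k, f₁ k ∂μ) ∂μ = 0 := by
  rw [integral_sub (h₁.mul_const _) (h₂.mul_const _), integral_mul_const, integral_mul_const]
  ring

theorem integral_pos_of_continuous_of_nonneg [TopologicalSpace G] [OpensMeasurableSpace G]
    [IsFiniteMeasureOnCompacts μ] {f : G → ℝ} (hc : Continuous f) (hs : HasCompactSupport f)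
    (hf : 0 ≤ f) (hμ : 0 < μ (Function.support f)) : 0 < ∫ g, f g ∂μ :=
  (integral_pos_iff_support_of_nonneg hf (hc.integrable_of_hasCompactSupport hs)).2 hμ

end

theorem stmt11_general {G X : Type*} [Group G] [TopologicalSpace G]
    [MeasurableSpace G] [BorelSpace G]
    [MulAction G X]
    -- the field of left Haar measures on the stabilizers
    (μ : X → Measure G)
    (hpos : ∀ (y : X) (U : Set G), IsOpen U → (∃ g ∈ U, g • y = y) → 0 < μ y U)
    (hfin : ∀ (y : X) (C : Set G), IsCompact C → μ y C < ⊤)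
    -- the data of the construction
    (x : X) (g₁ g₂ : G) (hg₁ : g₁ • x = x) (hg₂ : g₂ • x = x)
    (f₁ f₂ : G → ℝ)
    (hf₁c : Continuous f₁) (hf₁supp : HasCompactSupport f₁)
    (hf₂c : Continuous f₂) (hf₂supp : HasCompactSupport f₂) (hf₂pos : ∀ g, 0 ≤ f₂ g)
    (hdisj : Function.support f₁ ∩ Function.support f₂ = ∅)
    (hf₁g₁ : 0 < f₁ g₁) (hf₂g₂ : 0 < f₂ g₂) :
    (∀ y : X,
      ∫ h, (f₁ h * ∫ k, f₂ k ∂μ y - f₂ h * ∫ k, f₁ k ∂μ y) ∂μ y = 0) ∧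
    (∃ h : G, h • x = x ∧
      f₁ h * (∫ k, f₂ k ∂μ x) - f₂ h * (∫ k, f₁ k ∂μ x) ≠ 0) := by
  have hμ (y : X) : IsFiniteMeasureOnCompacts (μ y) := ⟨hfin y⟩
  refine ⟨fun y => integral_mul_integral_sub_mul_integral_eq_zero
    (hf₁c.integrable_of_hasCompactSupport hf₁supp) (hf₂c.integrable_of_hasCompactSupport hf₂supp),
    g₁, hg₁, ?_⟩
  have hf₂g₁ : f₂ g₁ = 0 :=
    Function.notMem_support.1 fun h => (Set.eq_empty_iff_forall_notMem.1 hdisj) g₁ ⟨hf₁g₁.ne', h⟩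
  have hI₂ : 0 < ∫ k, f₂ k ∂μ x := integral_pos_of_continuous_of_nonneg hf₂c hf₂supp hf₂pos
    (hpos x _ hf₂c.isOpen_support ⟨g₂, hf₂g₂.ne', hg₂⟩)
  rw [hf₂g₁, zero_mul, sub_zero]
  exact (mul_pos hf₁g₁ hI₂).ne'

/-- Let `G` act on a compact space `X` with a continuous field of left
Haar measures `{μ_y}` on the stabilizers.  Let `x ∈ X` have nontrivial stabilizer,
`g₁ ≠ g₂ ∈ G_x`, and `f₁, f₂ ∈ C_c(G)` nonnegative with disjoint supports and
`f_i(g_i) > 0`.  Define `η₀(s)(y) = f₁(s) ∫_{G_y} f₂ dμ_y − f₂(s) ∫_{G_y} f₁ dμ_y`.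
Then (a) `∫_{G_y} η₀(h)(y) dμ_y(h) = 0` for every `y`; and (b) the restriction of
`h ↦ η₀(h)(x)` to `G_x` is not identically zero. -/
theorem stmt11 {G X : Type*} [Group G] [TopologicalSpace G] [IsTopologicalGroup G]
    [LocallyCompactSpace G] [MeasurableSpace G] [BorelSpace G]
    [TopologicalSpace X] [CompactSpace X] [T2Space X]
    [MulAction G X] [ContinuousSMul G X]
    -- the field of left Haar measures on the stabilizers
    (μ : X → Measure G)
    (hsupp : ∀ y, μ y {g : G | g • y ≠ y} = 0)
    (hinv : ∀ (y : X) (h : G), h • y = y → Measure.map (fun g => h * g) (μ y) = μ y)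
    (hpos : ∀ (y : X) (U : Set G), IsOpen U → (∃ g ∈ U, g • y = y) → 0 < μ y U)
    (hfin : ∀ (y : X) (C : Set G), IsCompact C → μ y C < ⊤)
    (hcont : ∀ f : G → ℝ, Continuous f → HasCompactSupport f →
      Continuous fun y => ∫ g, f g ∂μ y)
    -- the data of the construction
    (x : X) (g₁ g₂ : G) (hg : g₁ ≠ g₂) (hg₁ : g₁ • x = x) (hg₂ : g₂ • x = x)
    (f₁ f₂ : G → ℝ)
    (hf₁c : Continuous f₁) (hf₁supp : HasCompactSupport f₁) (hf₁pos : ∀ g, 0 ≤ f₁ g)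
    (hf₂c : Continuous f₂) (hf₂supp : HasCompactSupport f₂) (hf₂pos : ∀ g, 0 ≤ f₂ g)
    (hdisj : Function.support f₁ ∩ Function.support f₂ = ∅)
    (hf₁g₁ : 0 < f₁ g₁) (hf₂g₂ : 0 < f₂ g₂) :
    (∀ y : X,
      ∫ h, (f₁ h * ∫ k, f₂ k ∂μ y - f₂ h * ∫ k, f₁ k ∂μ y) ∂μ y = 0) ∧
    (∃ h : G, h • x = x ∧
      f₁ h * (∫ k, f₂ k ∂μ x) - f₂ h * (∫ k, f₁ k ∂μ x) ≠ 0) :=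
  stmt11_general μ hpos hfin x g₁ g₂ hg₁ hg₂ f₁ f₂ hf₁c hf₁supp hf₂c hf₂supp hf₂pos hdisj hf₁g₁
    hf₂g₂
end
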